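/- Let P be a prior function (assigning to every finite type X a set P(X) ⊆ Δ_X), let X and Y be finite types, and let f be a faithful X-Y embedding. Then the induced inference procedure I^P is invariant under f — that is, for all constraints KB, θ ⊆ Δ_X: P(X)|KB ⊆ θ iff P(Y)|f*(KB) ⊆ f*(θ) — if and only if P(X) and P(Y) correspond under f. -/

import Mathlib

/-- A probability measure (probability mass function) on a finite type. -/
structure PM (X : Type) [Fintype X] where
  pm : X → ℝ
  nonneg : ∀ x, 0 ≤ pm x
  total : ∑ x, pm x = 1

namespace PM

variable {X Y : Type} [Fintype X] [Fintype Y]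

/-- The probability of a set `S`: `μ(S) = ∑_{x ∈ S} μ(x)`. -/
noncomputable def prob (μ : PM X) (S : Set X) : ℝ := ∑ x, S.indicator μ.pm x

lemma prob_nonneg (μ : PM X) (S : Set X) : 0 ≤ μ.prob S :=
  Finset.sum_nonneg fun x _ => Set.indicator_apply_nonneg fun _ => μ.nonneg x

/-- Marginal on the first component: `μ_X(A) = μ(A × Y)`. -/
noncomputable def margFst (μ : PM (X × Y)) : PM X where
  pm x := ∑ y, μ.pm (x, y)
  nonneg x := Finset.sum_nonneg fun y _ => μ.nonneg (x, y)
  total := by rw [← μ.total, ← Fintype.sum_prod_type]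

/-- Marginal on the second component: `μ_Y(B) = μ(X × B)`. -/
noncomputable def margSnd (μ : PM (X × Y)) : PM Y where
  pm y := ∑ x, μ.pm (x, y)
  nonneg y := Finset.sum_nonneg fun x _ => μ.nonneg (x, y)
  total := by rw [← μ.total, ← Fintype.sum_prod_type_right]

/-- Conditioning `μ|S`; the junk value `μ` is returned when `μ(S) = 0`. -/
noncomputable def cond (μ : PM X) (S : Set X) : PM X :=
  if h : 0 < μ.prob S then
    { pm := fun x => S.indicator μ.pm x / μ.prob S
      nonneg := fun x =>
        div_nonneg (Set.indicator_apply_nonneg fun _ => μ.nonneg x) (le_of_lt h)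
      total := by
        rw [← Finset.sum_div]
        exact div_self (ne_of_gt h) }
  else μ

end PM

open PM

/-- An `X`-inference procedure: a partial map on sets of probability measures. -/
structure InfProc (X : Type) [Fintype X] where
  dom : Set (Set (PM X))
  map : Set (PM X) → Set (PM X)
  map_subset : ∀ A ∈ dom, map A ⊆ A
  map_empty_iff : ∀ A ∈ dom, (map A = ∅ ↔ A = ∅)

/-- `KB ⊢_I θ`. -/
def Infers {X : Type} [Fintype X] (I : InfProc X) (KB θ : Set (PM X)) : Prop :=
  I.map KB ⊆ θ

section Lift

variable {X Y : Type} [Fintype X] [Fintype Y]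

/-- A constraint on `Δ_X` viewed as a constraint on `Δ_{X×Y}`: `KB↑`. -/
def liftKB (Y : Type) [Fintype Y] (KB : Set (PM X)) : Set (PM (X × Y)) :=
  {μ | margFst μ ∈ KB}

/-- `proj_X(B) = {μ_X : μ ∈ B}`. -/
def projFst (B : Set (PM (X × Y))) : Set (PM X) := margFst '' B

/-- `ψ ⊆ Δ_{X×Y}` is `X`-conservative over `KB ⊆ Δ_X`. -/
def Conservative (KB : Set (PM X)) (ψ : Set (PM (X × Y))) : Prop :=
  projFst (liftKB Y KB ∩ ψ) = KB

end Lift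

/-- Robustness of a finitary inference procedure. -/
def Robust (I : ∀ (X : Type) [Fintype X], InfProc X) : Prop :=
  ∀ (X Y : Type) [Fintype X] [Fintype Y], ∀ KB φ : Set (PM X),
    KB ∈ (I X).dom → ∀ ψ : Set (PM (X × Y)), Conservative KB ψ →
      (Infers (I X) KB φ ↔ Infers (I (X × Y)) (liftKB Y KB ∩ ψ) (liftKB Y φ))

/-- An inference procedure is essentially entailment. -/
def EssEntail {X : Type} [Fintype X] (I : InfProc X) : Prop :=
  ∀ KB ∈ I.dom, ∀ (S : Set X) (α β : ℝ),
    Infers I KB {μ | α < μ.prob S ∧ μ.prob S < β} →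
    KB ⊆ {μ | α ≤ μ.prob S ∧ μ.prob S ≤ β}

def DI1 (I : ∀ (X : Type) [Fintype X], InfProc X) : Prop :=
  ∀ (X : Type) [Fintype X], ∀ (S : Set X) (α β : ℝ), α ≤ β →
    {μ : PM X | α ≤ μ.prob S ∧ μ.prob S ≤ β} ∈ (I X).dom

def DI2 (I : ∀ (X : Type) [Fintype X], InfProc X) : Prop :=
  ∀ (X Y : Type) [Fintype X] [Fintype Y], ∀ KB : Set (PM X),
    KB ∈ (I X).dom → liftKB Y KB ∈ (I (X × Y)).dom

def DI3 (I : ∀ (X : Type) [Fintype X], InfProc X) : Prop :=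
  ∀ (X : Type) [Fintype X], ∀ KB₁ KB₂ : Set (PM X),
    KB₁ ∈ (I X).dom → KB₂ ∈ (I X).dom → KB₁ ∩ KB₂ ∈ (I X).dom

/-- An `X`-`Y` embedding: a homomorphism of set algebras. -/
structure Emb (X Y : Type) where
  f : Set X → Set Y
  map_union : ∀ S T, f (S ∪ T) = f S ∪ f T
  map_compl : ∀ S, f Sᶜ = (f S)ᶜ

/-- A faithful embedding. -/
def Emb.Faithful {X Y : Type} (e : Emb X Y) : Prop :=
  ∀ S T : Set X, S ⊆ T ↔ e.f S ⊆ e.f T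

section Embeddings

variable {X Y : Type} [Fintype X] [Fintype Y]

/-- `μ` and `ν` correspond under `f`. -/
def Corr (e : Emb X Y) (μ : PM X) (ν : PM Y) : Prop :=
  ∀ S : Set X, μ.prob S = ν.prob (e.f S)

/-- `f*(D)`, the union over `μ ∈ D` of the measures corresponding to `μ`. -/
def fstar (e : Emb X Y) (D : Set (PM X)) : Set (PM Y) :=
  {ν | ∃ μ ∈ D, Corr e μ ν}

/-- Sets of measures `D_X` and `D_Y` correspond under `f`. -/
def SetCorr (e : Emb X Y) (DX : Set (PM X)) (DY : Set (PM Y)) : Prop :=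
  (∀ ν ∈ DY, ∃ μ ∈ DX, Corr e μ ν) ∧ (∀ μ ∈ DX, ∃ ν ∈ DY, Corr e μ ν)

end Embeddings

/-- Representation independence of a finitary inference procedure. -/
def RepInd (I : ∀ (X : Type) [Fintype X], InfProc X) : Prop :=
  ∀ (X Y : Type) [Fintype X] [Fintype Y] (e : Emb X Y), e.Faithful →
    (∀ KB : Set (PM X), KB ∈ (I X).dom ↔ fstar e KB ∈ (I Y).dom) ∧
    (∀ KB : Set (PM X), KB ∈ (I X).dom → ∀ θ : Set (PM X),
      (Infers (I X) KB θ ↔ Infers (I Y) (fstar e KB) (fstar e θ)))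

def DI4 (I : ∀ (X : Type) [Fintype X], InfProc X) : Prop :=
  ∀ (X Y : Type) [Fintype X] [Fintype Y] (e : Emb X Y), e.Faithful →
    ∀ KB : Set (PM X), (KB ∈ (I X).dom ↔ fstar e KB ∈ (I Y).dom)

/-- `A ⇔ B` for sets of measures. -/
def iffSet {α : Type*} (A B : Set α) : Set α := (A ∩ B) ∪ (Aᶜ ∩ Bᶜ)

def DI5 (I : ∀ (X : Type) [Fintype X], InfProc X) : Prop :=
  ∀ (X Y : Type) [Fintype X] [Fintype Y] (KB : Set (PM (X × Y))) (e : Emb X Y),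
    e.Faithful → KB ∈ (I (X × Y)).dom → ∀ φ₁ : Set (PM X),
      KB ∩ iffSet (liftKB Y φ₁) {μ | margSnd μ ∈ fstar e φ₁} ∈ (I (X × Y)).dom

/-- Minimal default independence. -/
def MDI (I : ∀ (X : Type) [Fintype X], InfProc X) : Prop :=
  ∀ (X Y : Type) [Fintype X] [Fintype Y], ∀ KB : Set (PM X), ∀ (S : Set X) (T : Set Y),
    liftKB Y KB ∈ (I (X × Y)).dom →
    Infers (I (X × Y)) (liftKB Y KB)
      {μ | μ.prob (S ×ˢ T) = μ.prob (S ×ˢ (Set.univ : Set Y)) * μ.prob ((Set.univ : Set X) ×ˢ T)}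

/-- `KB` depends only on `S₁, …, S_k`. -/
def DependsOnly {X : Type} [Fintype X] {k : ℕ} (KB : Set (PM X)) (S : Fin k → Set X) : Prop :=
  ∀ μ μ' : PM X, (∀ i, μ.prob (S i) = μ'.prob (S i)) → (μ ∈ KB ↔ μ' ∈ KB)

/-- An atom over `S₁, …, S_k`. -/
def Atom {X : Type} {k : ℕ} (S : Fin k → Set X) (c : Fin k → Bool) : Set X :=
  ⋂ i, (if c i then S i else (S i)ᶜ)

section KL

variable {X : Type} [Fintype X]

/-- Absolute continuity of pmfs. -/
def AbsCont (μ' μ : PM X) : Prop := ∀ x, μ.pm x = 0 → μ'.pm x = 0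

/-- Relative entropy `D(μ'‖μ) ∈ [0,∞]` (it is `⊤` unless `μ' ≪ μ`). -/
noncomputable def KL (μ' μ : PM X) : EReal := by
  classical
  exact if AbsCont μ' μ then
    ((∑ x, μ'.pm x * Real.log (μ'.pm x / μ.pm x) : ℝ) : EReal)
  else ⊤

/-- The relative-entropy projection `μ|θ`. -/
def klProj (μ : PM X) (θ : Set (PM X)) : Set (PM X) :=
  {μ' | μ' ∈ θ ∧ KL μ' μ ≠ ⊤ ∧ ∀ μ'' ∈ θ, KL μ' μ ≤ KL μ'' μ}

/-- `D|θ = ⋃_{μ ∈ D} μ|θ`. -/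
def DProj (D : Set (PM X)) (θ : Set (PM X)) : Set (PM X) :=
  ⋃ μ ∈ D, klProj μ θ

end KL

section Products

variable {n : ℕ} {X : Fin n → Type} [∀ i, Fintype (X i)]

/-- The `i`-th marginal of a measure on a finite product. -/
noncomputable def margPi (μ : PM (∀ i, X i)) (i : Fin n) : PM (X i) where
  pm a := μ.prob {x | x i = a}
  nonneg a := PM.prob_nonneg _ _
  total := by
    classical
    unfold PM.prob
    rw [Finset.sum_comm]
    have h : ∀ x : (∀ i, X i),
        (∑ a, ({y : ∀ j, X j | y i = a}).indicator μ.pm x) = μ.pm x := by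
      intro x
      simp [Set.indicator_apply]
    simp only [h]
    exact μ.total

/-- `μ` is a product measure on `X₁ × ⋯ × Xₙ`. -/
def IsProdPM (μ : PM (∀ i, X i)) : Prop :=
  ∃ μi : ∀ i, PM (X i), ∀ U : ∀ i, Set (X i),
    μ.prob {x | ∀ i, x i ∈ U i} = ∏ i, (μi i).prob (U i)

end Products

/-- The set `P_Π(X)` of product measures. -/
def PPi {n : ℕ} (X : Fin n → Type) [∀ i, Fintype (X i)] : Set (PM (∀ i, X i)) :=
  {μ | IsProdPM μ}

/-- `e` is a product embedding. -/
def IsProdEmb {n : ℕ} {X Y : Fin n → Type} (e : Emb (∀ i, X i) (∀ i, Y i)) : Prop :=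
  ∃ ei : ∀ i, Emb (X i) (Y i), ∀ S : Set (∀ i, X i),
    e.f S = ⋃ x ∈ S, {y | ∀ i, y i ∈ (ei i).f {x i}}

/-!
A homomorphism of the finite set algebras `Set X → Set Y` is a preimage map `S ↦ g ⁻¹' S`, so `ν`
corresponds to `μ` exactly when `μ = g_* ν`, and `f*(D)` is the preimage of `D` under `g_*`.
Push-forward does not increase relative entropy (log-sum inequality), and every `μ ≪ g_* ν` is the
push-forward of `ν` reweighted on each fibre, at the same divergence from `ν` as `μ` from `g_* ν`.
Hence `g_*` maps the projections of `ν` onto `f*(KB)` onto the projections of `g_* ν` onto `KB`,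
i.e. `g_*(P(Y)|f*(KB)) = g_*(P(Y))|KB`. Invariance thus says that `P(X)|KB` and `g_*(P(Y))|KB`
have the same supersets, i.e. coincide, for every `KB`; for `KB = Δ_X` projection is the identity
by Gibbs' inequality, so this is `P(X) = g_*(P(Y))`, which is correspondence under `f`.
-/

open Finset Real

namespace Emb

variable {X Y : Type} (e : Emb X Y)

lemma map_univ : e.f Set.univ = Set.univ := by
  have h := e.map_union ∅ ∅ᶜ
  rwa [e.map_compl, Set.union_compl_self, Set.union_compl_self] at h

lemma map_empty : e.f ∅ = ∅ := by
  have h := e.map_compl Set.univ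
  rwa [Set.compl_univ, e.map_univ, Set.compl_univ] at h

lemma map_inter (S T : Set X) : e.f (S ∩ T) = e.f S ∩ e.f T := by
  rw [← compl_compl (S ∩ T), Set.compl_inter, e.map_compl, e.map_union, e.map_compl, e.map_compl,
    Set.compl_union, compl_compl, compl_compl]

lemma map_mono {S T : Set X} (h : S ⊆ T) : e.f S ⊆ e.f T := by
  rw [← Set.union_eq_right.2 h, e.map_union]
  exact Set.subset_union_left

lemma map_coe_finset (s : Finset X) : e.f ↑s = ⋃ x ∈ s, e.f {x} := by
  classical
  induction s using Finset.induction_on with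
  | empty => simpa using e.map_empty
  | insert a s _ ih => rw [coe_insert, Set.insert_eq, e.map_union, ih, set_biUnion_insert]

lemma exists_eq_preimage [Finite X] : ∃ g : Y → X, ∀ S, e.f S = g ⁻¹' S := by
  have hcover : ∀ y, ∃ x, y ∈ e.f {x} := fun y => by
    cases nonempty_fintype X
    have hy : y ∈ e.f ↑(univ : Finset X) := by rw [coe_univ, e.map_univ]; trivial
    rw [e.map_coe_finset] at hy
    simpa using hy
  choose g hg using hcover
  refine ⟨g, fun S => Set.ext fun y => ⟨fun hy => ?_, fun hy => e.map_mono (by simpa) (hg y)⟩⟩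
  by_contra hyS
  have hy' : y ∈ e.f ({g y} ∩ S) := by rw [e.map_inter]; exact ⟨hg y, hy⟩
  rwa [(Set.singleton_inter_eq_empty.2 hyS : {g y} ∩ S = ∅), e.map_empty] at hy'

end Emb

lemma sub_le_mul_log_div {a b : ℝ} (ha : 0 ≤ a) (hb : 0 ≤ b) (hab : b = 0 → a = 0) :
    a - b ≤ a * log (a / b) := by
  rcases hb.eq_or_lt with rfl | hb
  · simp [hab rfl]
  have h := mul_le_mul_of_nonneg_left (self_sub_one_le_mul_log (div_nonneg ha hb.le)) hb.le
  rwa [mul_sub, mul_div_cancel₀ _ hb.ne', mul_one, ← mul_assoc, mul_div_cancel₀ _ hb.ne'] at h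

lemma sub_lt_mul_log_div {a b : ℝ} (ha : 0 ≤ a) (hb : 0 ≤ b) (hab : b = 0 → a = 0) (hne : a ≠ b) :
    a - b < a * log (a / b) := by
  rcases hb.eq_or_lt with rfl | hb
  · exact absurd (hab rfl) hne
  have h := mul_lt_mul_of_pos_left (self_sub_one_lt_mul_log (div_nonneg ha hb.le)
    (fun h => hne ((div_eq_one_iff_eq hb.ne').1 h))) hb
  rwa [mul_sub, mul_div_cancel₀ _ hb.ne', mul_one, ← mul_assoc, mul_div_cancel₀ _ hb.ne'] at h

/-- The log-sum inequality. -/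
lemma sum_mul_log_div_sum_le {ι : Type*} (s : Finset ι) {a b : ι → ℝ} (ha : ∀ i ∈ s, 0 ≤ a i)
    (hb : ∀ i ∈ s, 0 ≤ b i) (hab : ∀ i ∈ s, b i = 0 → a i = 0) :
    (∑ i ∈ s, a i) * log ((∑ i ∈ s, a i) / ∑ i ∈ s, b i) ≤ ∑ i ∈ s, a i * log (a i / b i) := by
  set A := ∑ i ∈ s, a i
  set B := ∑ i ∈ s, b i
  rcases (sum_nonneg ha).eq_or_lt with hA | hA
  · rw [show A = 0 from hA.symm, zero_mul]
    refine sum_nonneg fun i hi => ?_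
    simp [(sum_eq_zero_iff_of_nonneg ha).1 hA.symm i hi]
  have hB : 0 < B := (sum_nonneg hb).lt_of_ne fun hB => hA.ne' <|
    sum_eq_zero fun i hi => hab i hi ((sum_eq_zero_iff_of_nonneg hb).1 hB.symm i hi)
  have hc : 0 < A / B := div_pos hA hB
  have key : ∀ i ∈ s, a i - A / B * b i + a i * log (A / B) ≤ a i * log (a i / b i) := by
    intro i hi
    rcases (ha i hi).eq_or_lt with hai | hai
    · simp [← hai, mul_nonneg hc.le (hb i hi)]
    have hbi : b i ≠ 0 := fun h => hai.ne' (hab i hi h)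
    have h := sub_le_mul_log_div (ha i hi) (mul_nonneg hc.le (hb i hi))
      fun h => absurd h (mul_ne_zero hc.ne' hbi)
    rw [div_mul_eq_div_div_swap, log_div (div_ne_zero hai.ne' hbi) hc.ne'] at h
    linarith
  calc A * log (A / B) = ∑ i ∈ s, (a i - A / B * b i + a i * log (A / B)) := by
        rw [sum_add_distrib, sum_sub_distrib, ← mul_sum, ← sum_mul, div_mul_cancel₀ _ hB.ne']
        ring
    _ ≤ ∑ i ∈ s, a i * log (a i / b i) := sum_le_sum key

namespace PM

variable {X Y : Type} [Fintype X] [Fintype Y]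

@[ext] lemma ext {μ ν : PM X} (h : ∀ x, μ.pm x = ν.pm x) : μ = ν := by
  cases μ; cases ν; simp only [PM.mk.injEq]; exact funext h

lemma prob_singleton (μ : PM X) (x : X) : μ.prob {x} = μ.pm x := by
  classical
  simp [prob, Set.indicator_apply]

lemma sum_mul_prob_preimage_singleton (g : Y → X) (ν : PM Y) (c : X → ℝ) :
    ∑ x, c x * ν.prob (g ⁻¹' {x}) = ∑ y, c (g y) * ν.pm y := by
  classical
  simp only [prob, mul_sum, Set.indicator_apply, Set.mem_preimage, Set.mem_singleton_iff]
  rw [sum_comm]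
  simp

noncomputable def push (g : Y → X) (ν : PM Y) : PM X where
  pm x := ν.prob (g ⁻¹' {x})
  nonneg x := ν.prob_nonneg _
  total := by simpa [ν.total] using sum_mul_prob_preimage_singleton g ν 1

lemma sum_mul_push (g : Y → X) (ν : PM Y) (c : X → ℝ) :
    ∑ x, c x * (push g ν).pm x = ∑ y, c (g y) * ν.pm y :=
  sum_mul_prob_preimage_singleton g ν c

lemma push_prob (g : Y → X) (ν : PM Y) (S : Set X) :
    (push g ν).prob S = ν.prob (g ⁻¹' S) := by
  classical
  have h := sum_mul_push g ν (S.indicator 1)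
  simp only [prob, Set.indicator_apply, Pi.one_apply, ite_mul, one_mul, zero_mul,
    Set.mem_preimage] at h ⊢
  exact h

lemma prob_eq_zero_iff (μ : PM X) (S : Set X) : μ.prob S = 0 ↔ ∀ x ∈ S, μ.pm x = 0 := by
  rw [prob, sum_eq_zero_iff_of_nonneg fun x _ => Set.indicator_apply_nonneg fun _ => μ.nonneg x]
  simp only [mem_univ, true_implies, Set.indicator_apply_eq_zero]

lemma push_pm_eq_sum [DecidableEq X] (g : Y → X) (ν : PM Y) (x : X) :
    (push g ν).pm x = ∑ y with g y = x, ν.pm y := by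
  rw [sum_filter]
  refine sum_congr rfl fun y _ => ?_
  by_cases hy : g y = x
  · rw [if_pos hy]
    exact Set.indicator_of_mem (s := g ⁻¹' {x}) hy _
  · rw [if_neg hy]
    exact Set.indicator_of_notMem (s := g ⁻¹' {x}) hy _

lemma absCont_push (g : Y → X) {ν' ν : PM Y} (h : AbsCont ν' ν) :
    AbsCont (push g ν') (push g ν) := fun _ hx =>
  (prob_eq_zero_iff _ _).2 fun y hy => h y ((prob_eq_zero_iff _ _).1 hx y hy)

noncomputable def lift (g : Y → X) (ν : PM Y) (μ : PM X) (h : AbsCont μ (push g ν)) : PM Y where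
  pm y := μ.pm (g y) / (push g ν).pm (g y) * ν.pm y
  nonneg y := mul_nonneg (div_nonneg (μ.nonneg _) ((push g ν).nonneg _)) (ν.nonneg y)
  total := by
    rw [← μ.total, ← sum_mul_push g ν (fun x => μ.pm x / (push g ν).pm x)]
    exact sum_congr rfl fun x _ => div_mul_cancel_of_imp (h x)

lemma push_lift (g : Y → X) (ν : PM Y) (μ : PM X) (h : AbsCont μ (push g ν)) :
    push g (lift g ν μ h) = μ := by
  classical
  ext x
  have hfibre : ∀ y ∈ ({y | g y = x} : Finset Y),
      (lift g ν μ h).pm y = μ.pm x / (push g ν).pm x * ν.pm y := fun y hy => by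
    rw [← (mem_filter.1 hy).2]
    rfl
  calc (push g (lift g ν μ h)).pm x = ∑ y with g y = x, (lift g ν μ h).pm y := push_pm_eq_sum ..
    _ = ∑ y with g y = x, μ.pm x / (push g ν).pm x * ν.pm y := sum_congr rfl hfibre
    _ = μ.pm x / (push g ν).pm x * (push g ν).pm x := by rw [← mul_sum, push_pm_eq_sum]
    _ = μ.pm x := div_mul_cancel_of_imp (h x)

end PM

section KL

variable {X Y : Type} [Fintype X] [Fintype Y]

lemma KL_of_absCont {μ' μ : PM X} (h : AbsCont μ' μ) :
    KL μ' μ = ((∑ x, μ'.pm x * log (μ'.pm x / μ.pm x) : ℝ) : EReal) := by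
  rw [KL, if_pos h]

lemma KL_of_not_absCont {μ' μ : PM X} (h : ¬AbsCont μ' μ) : KL μ' μ = ⊤ := by
  rw [KL, if_neg h]

lemma absCont_of_KL_ne_top {μ' μ : PM X} (h : KL μ' μ ≠ ⊤) : AbsCont μ' μ :=
  not_not.1 fun hac => h (KL_of_not_absCont hac)

lemma KL_self (μ : PM X) : KL μ μ = 0 := by
  rw [KL_of_absCont fun _ h => h, EReal.coe_eq_zero]
  refine sum_eq_zero fun x _ => ?_
  rcases eq_or_ne (μ.pm x) 0 with hx | hx
  · rw [hx, zero_mul]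
  · rw [div_self hx, log_one, mul_zero]

lemma KL_nonneg (μ' μ : PM X) : 0 ≤ KL μ' μ := by
  by_cases h : AbsCont μ' μ
  · rw [KL_of_absCont h, EReal.coe_nonneg]
    calc (0 : ℝ) = ∑ x, (μ'.pm x - μ.pm x) := by rw [sum_sub_distrib, μ'.total, μ.total, sub_self]
      _ ≤ _ := sum_le_sum fun x _ => sub_le_mul_log_div (μ'.nonneg x) (μ.nonneg x) (h x)
  · rw [KL_of_not_absCont h]
    exact le_top

lemma eq_of_KL_le_zero {μ' μ : PM X} (hle : KL μ' μ ≤ 0) : μ' = μ := by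
  have h := absCont_of_KL_ne_top (hle.trans_lt EReal.zero_lt_top).ne
  rw [KL_of_absCont h, EReal.coe_nonpos] at hle
  by_contra hne
  obtain ⟨x, hx⟩ : ∃ x, μ'.pm x ≠ μ.pm x := not_forall.1 fun hall => hne (PM.ext hall)
  have hlt : ∑ x, (μ'.pm x - μ.pm x) < ∑ x, μ'.pm x * log (μ'.pm x / μ.pm x) :=
    sum_lt_sum (fun x _ => sub_le_mul_log_div (μ'.nonneg x) (μ.nonneg x) (h x))
      ⟨x, mem_univ x, sub_lt_mul_log_div (μ'.nonneg x) (μ.nonneg x) (h x) hx⟩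
  rw [sum_sub_distrib, μ'.total, μ.total, sub_self] at hlt
  linarith

lemma KL_push_le (g : Y → X) (ν' ν : PM Y) : KL (PM.push g ν') (PM.push g ν) ≤ KL ν' ν := by
  classical
  by_cases hac : AbsCont ν' ν
  · rw [KL_of_absCont hac, KL_of_absCont (PM.absCont_push g hac), EReal.coe_le_coe_iff,
      ← sum_fiberwise univ g]
    refine sum_le_sum fun x _ => ?_
    rw [PM.push_pm_eq_sum, PM.push_pm_eq_sum]
    exact sum_mul_log_div_sum_le _ (fun y _ => ν'.nonneg y) (fun y _ => ν.nonneg y)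
      fun y _ => hac y
  · rw [KL_of_not_absCont hac]
    exact le_top

lemma KL_lift (g : Y → X) (ν : PM Y) (μ : PM X) (h : AbsCont μ (PM.push g ν)) :
    KL (PM.lift g ν μ h) ν = KL μ (PM.push g ν) := by
  set r : X → ℝ := fun x => μ.pm x / (PM.push g ν).pm x
  have hac : AbsCont (PM.lift g ν μ h) ν := fun y hy => by
    change r (g y) * ν.pm y = 0
    rw [hy, mul_zero]
  rw [KL_of_absCont hac, KL_of_absCont h, EReal.coe_eq_coe_iff]
  calc ∑ y, (PM.lift g ν μ h).pm y * log ((PM.lift g ν μ h).pm y / ν.pm y)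
      = ∑ y, r (g y) * log (r (g y)) * ν.pm y := by
        refine sum_congr rfl fun y _ => ?_
        change r (g y) * ν.pm y * log (r (g y) * ν.pm y / ν.pm y) = _
        rcases eq_or_ne (ν.pm y) 0 with hy | hy
        · simp [hy]
        · rw [mul_div_cancel_right₀ _ hy, mul_right_comm]
    _ = ∑ x, r x * log (r x) * (PM.push g ν).pm x :=
        (PM.sum_mul_push g ν fun x => r x * log (r x)).symm
    _ = ∑ x, μ.pm x * log (μ.pm x / (PM.push g ν).pm x) :=
        sum_congr rfl fun x _ => by rw [mul_right_comm, div_mul_cancel_of_imp (h x)]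

end KL

section Correspondence

variable {X Y : Type} [Fintype X] [Fintype Y] {e : Emb X Y} {g : Y → X}

lemma corr_iff_push_eq (hg : ∀ S, e.f S = g ⁻¹' S) {μ : PM X} {ν : PM Y} :
    Corr e μ ν ↔ PM.push g ν = μ := by
  simp only [Corr, hg, ← PM.push_prob]
  refine ⟨fun h => PM.ext fun x => ?_, fun h S => h ▸ rfl⟩
  rw [← PM.prob_singleton, ← PM.prob_singleton, h]

lemma fstar_eq_preimage_push (hg : ∀ S, e.f S = g ⁻¹' S) (D : Set (PM X)) :
    fstar e D = PM.push g ⁻¹' D :=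
  Set.ext fun ν => ⟨fun ⟨_, hμ, hc⟩ => show PM.push g ν ∈ D from (corr_iff_push_eq hg).1 hc ▸ hμ,
    fun h => ⟨_, h, (corr_iff_push_eq hg).2 rfl⟩⟩

lemma setCorr_iff_image_push_eq (hg : ∀ S, e.f S = g ⁻¹' S) {DX : Set (PM X)}
    {DY : Set (PM Y)} : SetCorr e DX DY ↔ PM.push g '' DY = DX := by
  simp only [SetCorr, corr_iff_push_eq hg, exists_eq_right']
  rw [Set.Subset.antisymm_iff, Set.image_subset_iff]
  rfl

end Correspondence

section Projection

variable {X Y : Type} [Fintype X] [Fintype Y]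

lemma klProj_univ (μ : PM X) : klProj μ Set.univ = {μ} := by
  ext μ'
  refine ⟨fun ⟨_, _, hmin⟩ => ?_, ?_⟩
  · exact eq_of_KL_le_zero ((hmin μ trivial).trans (KL_self μ).le)
  · rintro rfl
    exact ⟨trivial, by simp [KL_self], fun μ'' _ => (KL_self μ').trans_le (KL_nonneg μ'' μ')⟩

lemma DProj_univ (D : Set (PM X)) : DProj D Set.univ = D := by
  simp [DProj, klProj_univ]

lemma push_mem_klProj {g : Y → X} {ν ν' : PM Y} {KB : Set (PM X)}
    (h : ν' ∈ klProj ν (PM.push g ⁻¹' KB)) : PM.push g ν' ∈ klProj (PM.push g ν) KB := by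
  obtain ⟨hKB, hfin, hmin⟩ := h
  refine ⟨hKB, ne_top_of_le_ne_top hfin (KL_push_le g ν' ν), fun μ hμ => ?_⟩
  by_cases htop : KL μ (PM.push g ν) = ⊤
  · exact htop ▸ le_top
  have hac := absCont_of_KL_ne_top htop
  calc KL (PM.push g ν') (PM.push g ν) ≤ KL ν' ν := KL_push_le g ν' ν
    _ ≤ KL (PM.lift g ν μ hac) ν := hmin _ (by rwa [Set.mem_preimage, PM.push_lift])
    _ = KL μ (PM.push g ν) := KL_lift g ν μ hac

lemma exists_mem_klProj_push_eq {g : Y → X} {ν : PM Y} {μ : PM X} {KB : Set (PM X)}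
    (h : μ ∈ klProj (PM.push g ν) KB) :
    ∃ ν' ∈ klProj ν (PM.push g ⁻¹' KB), PM.push g ν' = μ := by
  obtain ⟨hKB, hfin, hmin⟩ := h
  have hac := absCont_of_KL_ne_top hfin
  refine ⟨PM.lift g ν μ hac, ⟨?_, ?_, fun ν'' hν'' => ?_⟩, PM.push_lift g ν μ hac⟩
  · rwa [Set.mem_preimage, PM.push_lift]
  · rwa [KL_lift]
  · rw [KL_lift]
    exact (hmin _ hν'').trans (KL_push_le g ν'' ν)

lemma image_push_klProj (g : Y → X) (ν : PM Y) (KB : Set (PM X)) :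
    PM.push g '' klProj ν (PM.push g ⁻¹' KB) = klProj (PM.push g ν) KB :=
  Set.Subset.antisymm (Set.image_subset_iff.2 fun _ => push_mem_klProj)
    fun _ h => exists_mem_klProj_push_eq h

lemma image_push_DProj (g : Y → X) (D : Set (PM Y)) (KB : Set (PM X)) :
    PM.push g '' DProj D (PM.push g ⁻¹' KB) = DProj (PM.push g '' D) KB := by
  simp only [DProj, Set.image_iUnion₂, Set.biUnion_image, image_push_klProj]

end Projection

theorem stmt17_general (P : ∀ (X : Type) [Fintype X], Set (PM X))
    (X Y : Type) [Fintype X] [Fintype Y] (e : Emb X Y) :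
    (∀ KB θ : Set (PM X),
        (DProj (P X) KB ⊆ θ ↔ DProj (P Y) (fstar e KB) ⊆ fstar e θ))
      ↔ SetCorr e (P X) (P Y) := by
  obtain ⟨g, hg⟩ := e.exists_eq_preimage
  simp only [fstar_eq_preimage_push hg, ← Set.image_subset_iff, image_push_DProj,
    setCorr_iff_image_push_eq hg]
  refine ⟨fun h => ?_, fun h KB θ => by rw [h]⟩
  simpa only [DProj_univ] using (eq_of_forall_ge_iff (h Set.univ)).symm

/-- the inference procedure `I^P` induced by a prior function
`P` is invariant under a faithful embedding `f` iff `P(X)` and `P(Y)`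
correspond under `f`. -/
theorem stmt17 (P : ∀ (X : Type) [Fintype X], Set (PM X))
    (X Y : Type) [Fintype X] [Fintype Y] (e : Emb X Y) (hf : e.Faithful) :
    (∀ KB θ : Set (PM X),
        (DProj (P X) KB ⊆ θ ↔ DProj (P Y) (fstar e KB) ⊆ fstar e θ))
      ↔ SetCorr e (P X) (P Y) :=
  stmt17_general P X Y e
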